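/- Let $K : \mathbb{R}^d \to \mathbb{R}$ satisfy $\lambda |y|^{-(d+s)} \le K(y) \le \Lambda |y|^{-(d+s)}$ with $0 < \lambda \le \Lambda$ and $s \in (0,1)$. Let $E \subset \mathbb{R}^d$ be a Borel set, $x \in \partial E$, and $r_0 > 0$. There exists $\gamma > 0$, depending only on $d$, $s$, $\lambda$, and $\Lambda$, such that if $|E \cap B_r(x)| \le \gamma |B_r|$ for all $r \in (0, r_0]$, then $\lim_{\varepsilon \to 0^+} \int_{\mathbb{R}^d \setminus B_\varepsilon(x)} \tilde\chi_E(y) K(x-y)\, dy = +\infty$. -/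

import Mathlib

open MeasureTheory Metric Filter Topology
open scoped ENNReal

noncomputable def tchi {d : ℕ} (E : Set (EuclideanSpace ℝ (Fin d))) (y : EuclideanSpace ℝ (Fin d)) : ℝ :=
  Set.indicator Eᶜ (fun _ => (1:ℝ)) y - Set.indicator E (fun _ => (1:ℝ)) y

noncomputable def curvInt {d : ℕ} (K : EuclideanSpace ℝ (Fin d) → ℝ)
    (E : Set (EuclideanSpace ℝ (Fin d))) (x : EuclideanSpace ℝ (Fin d)) (ε : ℝ) : ℝ :=
  ∫ y in (ball x ε)ᶜ, tchi E y * K (x - y)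

/-- The principal-value nonlocal mean curvature of `E` at `x` exists and equals `L ∈ [-∞,∞]`. -/
def HasCurvE {d : ℕ} (K : EuclideanSpace ℝ (Fin d) → ℝ) (E : Set (EuclideanSpace ℝ (Fin d)))
    (x : EuclideanSpace ℝ (Fin d)) (L : EReal) : Prop :=
  Tendsto (fun ε => ((curvInt K E x ε : ℝ) : EReal)) (𝓝[>] (0:ℝ)) (𝓝 L)

/-- `λ |y|^{-(d+s)} ≤ K(y) ≤ Λ |y|^{-(d+s)}`. -/
def KernelBounds {d : ℕ} (K : EuclideanSpace ℝ (Fin d) → ℝ) (s lam Lam : ℝ) : Prop :=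
  ∀ y : EuclideanSpace ℝ (Fin d), y ≠ 0 →
    lam * ‖y‖ ^ (-((d:ℝ) + s)) ≤ K y ∧ K y ≤ Lam * ‖y‖ ^ (-((d:ℝ) + s))

/-- `E` is touched at `x` by an exterior ball. -/
def ExtBall {d : ℕ} (E : Set (EuclideanSpace ℝ (Fin d))) (x : EuclideanSpace ℝ (Fin d)) : Prop :=
  ∃ z ρ, 0 < ρ ∧ ball z ρ ⊆ Eᶜ ∧ x ∈ sphere z ρ

/-- `curv_{K,E} ≤ C₀` in `Ω` in the viscosity sense. -/
def ViscSubsol {d : ℕ} (K : EuclideanSpace ℝ (Fin d) → ℝ) (E : Set (EuclideanSpace ℝ (Fin d)))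
    (Ω : Set (EuclideanSpace ℝ (Fin d))) (C₀ : ℝ) : Prop :=
  ∀ x ∈ frontier E ∩ Ω, ExtBall E x → ∀ L : EReal, HasCurvE K E x L → L ≤ (C₀ : EReal)

/-- `curv_{K,E} ≥ C₀` in `Ω` in the viscosity sense. -/
def ViscSupersol {d : ℕ} (K : EuclideanSpace ℝ (Fin d) → ℝ) (E : Set (EuclideanSpace ℝ (Fin d)))
    (Ω : Set (EuclideanSpace ℝ (Fin d))) (C₀ : ℝ) : Prop :=
  ∀ x ∈ frontier E ∩ Ω, (∃ z ρ, 0 < ρ ∧ ball z ρ ⊆ E ∧ x ∈ sphere z ρ) →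
    ∀ L : EReal, HasCurvE K E x L → (C₀ : EReal) ≤ L

/-!
Outside `E` the integrand is at least `λ |x - y|^{-(d+s)}`, on `E` at least `-Λ |x - y|^{-(d+s)}`.
On a dyadic annulus `B_{2ε}(x) \ B_ε(x)` with `2ε ≤ r₀` the density bound leaves at most a
`γ 2^d`-fraction of the annulus in `E`, so for small `γ` the annulus contributes at least
`c ε^{-s}`, `c > 0`. Hence `g ε ≥ g (2ε) + c ε^{-s}` for the truncated integral `g`; doubling `ε`
until it lands in `(r₀/2, r₀]`, where `g` is bounded below by some `m`, gives
`g ε ≥ m + c ε^{-s} → ∞`.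
-/

section General

theorem le_setIntegral_of_le_on_sdiff_of_le_on_inter {X : Type*} [MeasurableSpace X]
    {μ : Measure X} {f : X → ℝ} {A E : Set X} (hA : MeasurableSet A) (hE : MeasurableSet E)
    (hμA : μ A ≠ ∞) (hf : IntegrableOn f A μ) {a b : ℝ}
    (ha : ∀ y ∈ A \ E, a ≤ f y) (hb : ∀ y ∈ A ∩ E, b ≤ f y) :
    a * μ.real (A \ E) + b * μ.real (A ∩ E) ≤ ∫ y in A, f y ∂μ := by
  have hAE : μ (A \ E) ≠ ∞ := measure_ne_top_of_subset Set.sdiff_subset hμA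
  have hAE' : μ (A ∩ E) ≠ ∞ := measure_ne_top_of_subset Set.inter_subset_left hμA
  rw [← integral_inter_add_sdiff hE hf, add_comm (a * _)]
  exact add_le_add
    (setIntegral_ge_of_const_le_real (hA.inter hE) hAE' hb (hf.mono_set Set.inter_subset_left))
    (setIntegral_ge_of_const_le_real (hA.diff hE) hAE ha (hf.mono_set Set.sdiff_subset))

theorem le_of_le_two_mul_of_le_on_Ioc {g : ℝ → ℝ} {r m : ℝ}
    (hstep : ∀ ε, 0 < ε → 2 * ε ≤ r → g (2 * ε) ≤ g ε)
    (htop : ∀ ε ∈ Set.Ioc (r / 2) r, m ≤ g ε)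
    {ε : ℝ} (hε : ε ∈ Set.Ioc 0 r) : m ≤ g ε := by
  suffices h : ∀ n : ℕ, ∀ ε, 0 < ε → r < 2 ^ n * ε → ε ≤ r → m ≤ g ε by
    obtain ⟨n, hn⟩ := pow_unbounded_of_one_lt (r / ε) one_lt_two
    exact h n ε hε.1 (by rwa [div_lt_iff₀ hε.1] at hn) hε.2
  intro n
  induction n with
  | zero => intro ε _ hlt hle; rw [pow_zero, one_mul] at hlt; linarith
  | succ n ih =>
    intro ε hε hlt hle
    rcases lt_or_ge (r / 2) ε with hbig | hsmall
    · exact htop ε ⟨hbig, hle⟩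
    · exact (ih (2 * ε) (by positivity) (by rw [pow_succ] at hlt; linarith) (by linarith)).trans
        (hstep ε hε (by linarith))

theorem tendsto_atTop_of_add_rpow_le_of_le_on_Ioc {g : ℝ → ℝ} {r m c s : ℝ} (hc : 0 < c)
    (hs : 0 < s) (hr : 0 < r)
    (hstep : ∀ ε, 0 < ε → 2 * ε ≤ r → g (2 * ε) + c * ε ^ (-s) ≤ g ε)
    (htop : ∀ ε ∈ Set.Ioc (r / 2) r, m ≤ g ε) :
    Tendsto g (𝓝[>] 0) atTop := by
  have hmono (ε : ℝ) (hε : 0 < ε) (h2ε : 2 * ε ≤ r) : g (2 * ε) ≤ g ε :=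
    (le_add_of_nonneg_right (by positivity)).trans (hstep ε hε h2ε)
  have hlow : ∀ᶠ ε in 𝓝[>] 0, m + c * ε ^ (-s) ≤ g ε := by
    filter_upwards [Ioc_mem_nhdsGT (half_pos hr)] with ε hε
    have h2ε : 2 * ε ≤ r := by linarith [hε.2]
    linarith [hstep ε hε.1 h2ε,
      le_of_le_two_mul_of_le_on_Ioc hmono htop (ε := 2 * ε) ⟨by linarith [hε.1], h2ε⟩]
  exact tendsto_atTop_mono' _ hlow (tendsto_atTop_add_const_left _ m
    ((tendsto_rpow_neg_nhdsGT_zero (neg_neg_of_pos hs)).const_mul_atTop hc))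

theorem measureReal_le_mul_of_le_ofReal_mul {X : Type*} [MeasurableSpace X] {μ : Measure X}
    {s t : Set X} {γ : ℝ} (hγ : 0 ≤ γ) (ht : μ t ≠ ∞)
    (h : μ s ≤ ENNReal.ofReal γ * μ t) :
    μ.real s ≤ γ * μ.real t := by
  simpa [measureReal_def, ENNReal.toReal_mul, hγ] using
    ENNReal.toReal_mono (ENNReal.mul_ne_top ENNReal.ofReal_ne_top ht) h

theorem rpow_neg_le_mul_one_add_rpow_neg {ε t p : ℝ} (hε : 0 < ε) (hεt : ε ≤ t)
    (hp : 0 ≤ p) :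
    t ^ (-p) ≤ (1 + 1 / ε) ^ p * (1 + t) ^ (-p) := by
  have ht : 0 < t := hε.trans_le hεt
  have hc : 0 < 1 + 1 / ε := by positivity
  have hle : 1 + t ≤ (1 + 1 / ε) * t := by
    rw [add_mul, one_mul, one_div_mul_eq_div]
    linarith [(one_le_div hε).2 hεt]
  calc t ^ (-p) = (1 + 1 / ε) ^ p * ((1 + 1 / ε) * t) ^ (-p) := by
        rw [Real.mul_rpow hc.le ht.le, Real.rpow_neg hc.le, ← mul_assoc,
          mul_inv_cancel₀ (Real.rpow_pos_of_pos hc p).ne', one_mul]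
    _ ≤ (1 + 1 / ε) ^ p * (1 + t) ^ (-p) := mul_le_mul_of_nonneg_left
        (Real.rpow_le_rpow_of_nonpos (by positivity) hle (neg_nonpos.2 hp)) (by positivity)

end General

section Kernel

variable {d : ℕ} {K : EuclideanSpace ℝ (Fin d) → ℝ} {s lam Lam : ℝ}
  {E : Set (EuclideanSpace ℝ (Fin d))} {x y : EuclideanSpace ℝ (Fin d)}

theorem tchi_of_notMem (hy : y ∉ E) : tchi E y = 1 := by
  simp [tchi, hy]

theorem tchi_of_mem (hy : y ∈ E) : tchi E y = -1 := by
  simp [tchi, hy]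

theorem abs_tchi_le_one (E : Set (EuclideanSpace ℝ (Fin d))) (y : EuclideanSpace ℝ (Fin d)) :
    |tchi E y| ≤ 1 := by
  by_cases hy : y ∈ E
  · simp [tchi_of_mem hy]
  · simp [tchi_of_notMem hy]

theorem measurable_tchi (hE : MeasurableSet E) : Measurable (tchi E) :=
  (measurable_const.indicator hE.compl).sub (measurable_const.indicator hE)

theorem measureReal_ball_eq_pow_mul (x : EuclideanSpace ℝ (Fin d)) {r : ℝ} (hr : 0 < r) :
    volume.real (ball x r) = r ^ d * volume.real (ball (0 : EuclideanSpace ℝ (Fin d)) 1) := by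
  simp only [measureReal_def, Measure.addHaar_ball_of_pos volume x hr, finrank_euclideanSpace_fin,
    ENNReal.toReal_mul, ENNReal.toReal_ofReal (pow_nonneg hr.le d)]

theorem KernelBounds.nonneg (hKb : KernelBounds K s lam Lam) (hlam : 0 ≤ lam) (hy : y ≠ 0) :
    0 ≤ K y :=
  le_trans (by positivity) (hKb y hy).1

theorem KernelBounds.le_tchi_mul_of_notMem (hKb : KernelBounds K s lam Lam) (hs : 0 ≤ s)
    (hlam : 0 ≤ lam) (hy : y ∉ E) {b : ℝ} (hxy : 0 < dist x y) (hb : dist x y ≤ b) :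
    lam * b ^ (-((d : ℝ) + s)) ≤ tchi E y * K (x - y) := by
  rw [dist_eq_norm] at hxy hb
  rw [tchi_of_notMem hy, one_mul]
  calc lam * b ^ (-((d : ℝ) + s)) ≤ lam * ‖x - y‖ ^ (-((d : ℝ) + s)) :=
        mul_le_mul_of_nonneg_left
          (Real.rpow_le_rpow_of_nonpos hxy hb (neg_nonpos.2 (by positivity))) hlam
    _ ≤ K (x - y) := (hKb _ (norm_pos_iff.1 hxy)).1

theorem KernelBounds.neg_le_tchi_mul (hKb : KernelBounds K s lam Lam) (hs : 0 ≤ s)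
    (hlam : 0 ≤ lam) (hLam : 0 ≤ Lam) {a : ℝ} (ha : 0 < a) (hxy : a ≤ dist x y) :
    -(Lam * a ^ (-((d : ℝ) + s))) ≤ tchi E y * K (x - y) := by
  rw [dist_eq_norm] at hxy
  have hne : x - y ≠ 0 := norm_pos_iff.1 (ha.trans_le hxy)
  by_cases hy : y ∈ E
  · rw [tchi_of_mem hy, neg_one_mul, neg_le_neg_iff]
    calc K (x - y) ≤ Lam * ‖x - y‖ ^ (-((d : ℝ) + s)) := (hKb _ hne).2
      _ ≤ Lam * a ^ (-((d : ℝ) + s)) := mul_le_mul_of_nonneg_left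
          (Real.rpow_le_rpow_of_nonpos ha hxy (neg_nonpos.2 (by positivity))) hLam
  · rw [tchi_of_notMem hy, one_mul]
    exact (neg_nonpos.2 (by positivity)).trans (hKb.nonneg hlam hne)

theorem KernelBounds.integrableOn_tchi_mul_compl_ball (hKb : KernelBounds K s lam Lam)
    (hK : Measurable K) (hs : 0 < s) (hlam : 0 ≤ lam) (hLam : 0 ≤ Lam) (hE : MeasurableSet E)
    (x : EuclideanSpace ℝ (Fin d)) {ε : ℝ} (hε : 0 < ε) :
    IntegrableOn (fun y => tchi E y * K (x - y)) (ball x ε)ᶜ := by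
  set p : ℝ := d + s
  have hdom : Integrable fun y : EuclideanSpace ℝ (Fin d) =>
      Lam * (1 + 1 / ε) ^ p * (1 + ‖x - y‖) ^ (-p) :=
    ((integrable_one_add_norm (by rw [finrank_euclideanSpace_fin]; linarith)).comp_sub_left
      x).const_mul _
  refine hdom.integrableOn.mono' ?_ ?_
  · exact ((measurable_tchi hE).mul
      (hK.comp (measurable_const.sub measurable_id))).aestronglyMeasurable
  · filter_upwards [ae_restrict_mem measurableSet_ball.compl] with y hy
    have hεxy : ε ≤ ‖x - y‖ := by simpa [mem_ball, dist_eq_norm'] using hy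
    have hne : x - y ≠ 0 := norm_pos_iff.1 (hε.trans_le hεxy)
    calc ‖tchi E y * K (x - y)‖ = |tchi E y| * K (x - y) := by
          rw [Real.norm_eq_abs, abs_mul, abs_of_nonneg (hKb.nonneg hlam hne)]
      _ ≤ 1 * (Lam * ‖x - y‖ ^ (-p)) :=
          mul_le_mul (abs_tchi_le_one E y) (hKb _ hne).2 (hKb.nonneg hlam hne) zero_le_one
      _ ≤ Lam * (1 + 1 / ε) ^ p * (1 + ‖x - y‖) ^ (-p) := by
          rw [one_mul, mul_assoc]
          gcongr
          exact rpow_neg_le_mul_one_add_rpow_neg hε hεxy (by positivity)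

end Kernel

section Curvature

variable {d : ℕ} {K : EuclideanSpace ℝ (Fin d) → ℝ} {s lam Lam : ℝ}
  {E : Set (EuclideanSpace ℝ (Fin d))} {x : EuclideanSpace ℝ (Fin d)}

theorem curvInt_eq_add_setIntegral_annulus {a b : ℝ} (hab : a ≤ b)
    (hf : IntegrableOn (fun y => tchi E y * K (x - y)) (ball x a)ᶜ) :
    curvInt K E x a = curvInt K E x b + ∫ y in ball x b \ ball x a, tchi E y * K (x - y) := by
  have hsplit : (ball x a)ᶜ = (ball x b)ᶜ ∪ (ball x b \ ball x a) := by
    ext y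
    have := @ball_subset_ball _ _ x a b hab y
    simp only [Set.mem_compl_iff, Set.mem_union, Set.mem_sdiff]
    tauto
  have hsub : (ball x b)ᶜ ⊆ (ball x a)ᶜ := Set.compl_subset_compl.2 (ball_subset_ball hab)
  rw [curvInt, curvInt, hsplit]
  exact setIntegral_union (disjoint_compl_left.mono_right Set.sdiff_subset)
    (measurableSet_ball.diff measurableSet_ball) (hf.mono_set hsub) (hf.mono_set fun y hy => hy.2)

theorem KernelBounds.neg_mul_le_setIntegral_annulus (hKb : KernelBounds K s lam Lam) (hs : 0 ≤ s)
    (hlam : 0 ≤ lam) (hLam : 0 ≤ Lam) {a b : ℝ} (ha : 0 < a)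
    (hf : IntegrableOn (fun y => tchi E y * K (x - y)) (ball x b \ ball x a)) :
    -(Lam * a ^ (-((d : ℝ) + s))) * volume.real (ball x b) ≤
      ∫ y in ball x b \ ball x a, tchi E y * K (x - y) := by
  have hle : volume.real (ball x b \ ball x a) ≤ volume.real (ball x b) :=
    measureReal_mono Set.sdiff_subset measure_ball_lt_top.ne
  refine le_trans ?_ (setIntegral_ge_of_const_le_real (measurableSet_ball.diff measurableSet_ball)
    (measure_ne_top_of_subset Set.sdiff_subset measure_ball_lt_top.ne)
    (fun y hy => hKb.neg_le_tchi_mul hs hlam hLam ha (not_lt.1 (hy.2 ∘ mem_ball'.2))) hf)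
  exact mul_le_mul_of_nonpos_left hle (neg_nonpos.2 (by positivity))

theorem KernelBounds.le_setIntegral_dyadic_annulus (hKb : KernelBounds K s lam Lam) (hs : 0 ≤ s)
    (hlam : 0 ≤ lam) (hLam : 0 ≤ Lam) (hE : MeasurableSet E) {ε γ : ℝ} (hε : 0 < ε)
    (hf : IntegrableOn (fun y => tchi E y * K (x - y)) (ball x (2 * ε) \ ball x ε))
    (hden : volume.real (E ∩ ball x (2 * ε)) ≤ γ * volume.real (ball x (2 * ε))) :
    volume.real (ball (0 : EuclideanSpace ℝ (Fin d)) 1) * ε ^ (-s) *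
        (lam * 2 ^ (-((d : ℝ) + s)) * (2 ^ d - 1)
          - (lam * 2 ^ (-((d : ℝ) + s)) + Lam) * 2 ^ d * γ)
      ≤ ∫ y in ball x (2 * ε) \ ball x ε, tchi E y * K (x - y) := by
  set A := ball x (2 * ε) \ ball x ε
  set ω := volume.real (ball (0 : EuclideanSpace ℝ (Fin d)) 1)
  set p : ℝ := d + s
  have hmemA : ∀ y ∈ A, ε ≤ dist x y ∧ dist x y < 2 * ε := fun y hy =>
    ⟨not_lt.1 (hy.2 ∘ mem_ball'.2), mem_ball'.1 hy.1⟩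
  have hbound : lam * (2 * ε) ^ (-p) * volume.real (A \ E)
      + -(Lam * ε ^ (-p)) * volume.real (A ∩ E) ≤ ∫ y in A, tchi E y * K (x - y) :=
    le_setIntegral_of_le_on_sdiff_of_le_on_inter (measurableSet_ball.diff measurableSet_ball) hE
      (measure_ne_top_of_subset Set.sdiff_subset measure_ball_lt_top.ne) hf
      (fun y hy => hKb.le_tchi_mul_of_notMem hs hlam hy.2
        (hε.trans_le (hmemA y hy.1).1) (hmemA y hy.1).2.le)
      (fun y hy => hKb.neg_le_tchi_mul hs hlam hLam hε (hmemA y hy.1).1)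
  have hvolA : volume.real A = ω * ((2 * ε) ^ d - ε ^ d) := by
    rw [measureReal_sdiff (ball_subset_ball (by linarith)) measurableSet_ball,
      measureReal_ball_eq_pow_mul x (by positivity), measureReal_ball_eq_pow_mul x hε]
    ring
  have hvolAE : volume.real (A ∩ E) ≤ γ * ((2 * ε) ^ d * ω) := by
    rw [← measureReal_ball_eq_pow_mul x (by positivity)]
    have hsub : A ∩ E ⊆ E ∩ ball x (2 * ε) := fun y hy => ⟨hy.2, hy.1.1⟩
    exact (measureReal_mono hsub (measure_ne_top_of_subset Set.inter_subset_right
      measure_ball_lt_top.ne)).trans hden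
  have hsdiff : volume.real (A \ E) = volume.real A - volume.real (A ∩ E) :=
    eq_sub_of_add_eq' (measureReal_inter_add_sdiff hE
      (measure_ne_top_of_subset Set.sdiff_subset measure_ball_lt_top.ne))
  have h2ε : (2 * ε) ^ (-p) = 2 ^ (-p) * ε ^ (-p) := Real.mul_rpow zero_le_two hε.le
  have hεs : ε ^ (-s) = ε ^ (-p) * ε ^ d := by
    rw [← Real.rpow_natCast, ← Real.rpow_add hε]
    congr 1
    ring
  have hcoef : 0 ≤ (lam * 2 ^ (-p) + Lam) * ε ^ (-p) := by positivity
  have hE' := mul_le_mul_of_nonneg_left hvolAE hcoef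
  rw [hsdiff, hvolA, h2ε, mul_pow] at hbound
  rw [mul_pow] at hE'
  rw [hεs]
  linarith

theorem KernelBounds.curvInt_two_mul_add_le (hKb : KernelBounds K s lam Lam) (hK : Measurable K)
    (hs : 0 < s) (hlam : 0 ≤ lam) (hLam : 0 ≤ Lam) (hE : MeasurableSet E) {ε γ : ℝ}
    (hε : 0 < ε)
    (hden : volume.real (E ∩ ball x (2 * ε)) ≤ γ * volume.real (ball x (2 * ε))) :
    curvInt K E x (2 * ε) + volume.real (ball (0 : EuclideanSpace ℝ (Fin d)) 1) * ε ^ (-s) *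
        (lam * 2 ^ (-((d : ℝ) + s)) * (2 ^ d - 1)
          - (lam * 2 ^ (-((d : ℝ) + s)) + Lam) * 2 ^ d * γ)
      ≤ curvInt K E x ε := by
  have hf := hKb.integrableOn_tchi_mul_compl_ball hK hs hlam hLam hE x hε
  rw [curvInt_eq_add_setIntegral_annulus (b := 2 * ε) (by linarith) hf]
  exact add_le_add le_rfl (hKb.le_setIntegral_dyadic_annulus hs.le hlam hLam hE hε
    (hf.mono_set fun y hy => hy.2) hden)

theorem KernelBounds.sub_le_curvInt_of_mem_Ioc (hKb : KernelBounds K s lam Lam)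
    (hK : Measurable K) (hs : 0 < s) (hlam : 0 ≤ lam) (hLam : 0 ≤ Lam) (hE : MeasurableSet E)
    {r ε : ℝ} (hε : ε ∈ Set.Ioc (r / 2) r) :
    curvInt K E x r - Lam * (r / 2) ^ (-((d : ℝ) + s)) * volume.real (ball x r)
      ≤ curvInt K E x ε := by
  have hr : 0 < r / 2 := by linarith [hε.1, hε.2]
  have hε0 : 0 < ε := hr.trans hε.1
  have hf := hKb.integrableOn_tchi_mul_compl_ball hK hs hlam hLam hE x hε0
  have hann := hKb.neg_mul_le_setIntegral_annulus (b := r) hs.le hlam hLam hε0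
    (hf.mono_set fun y hy => hy.2)
  have hpow : ε ^ (-((d : ℝ) + s)) ≤ (r / 2) ^ (-((d : ℝ) + s)) :=
    Real.rpow_le_rpow_of_nonpos hr hε.1.le (neg_nonpos.2 (by positivity))
  have := mul_le_mul_of_nonneg_right (mul_le_mul_of_nonneg_left hpow hLam)
    (measureReal_nonneg (μ := volume) (s := ball x r))
  rw [curvInt_eq_add_setIntegral_annulus hε.2 hf]
  linarith

end Curvature

theorem stmt_9 (d : ℕ) (s lam Lam : ℝ) (hs : s ∈ Set.Ioo (0 : ℝ) 1)
    (hlam : 0 < lam) (hLam : lam ≤ Lam) :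
    ∃ γ : ℝ, 0 < γ ∧
      ∀ (K : EuclideanSpace ℝ (Fin d) → ℝ), Measurable K →
        KernelBounds K s lam Lam →
      ∀ (E : Set (EuclideanSpace ℝ (Fin d))), MeasurableSet E →
      ∀ x ∈ frontier E, ∀ r₀ : ℝ, 0 < r₀ →
        (∀ r ∈ Set.Ioc (0 : ℝ) r₀,
          volume (E ∩ ball x r) ≤
            ENNReal.ofReal γ * volume (ball (0 : EuclideanSpace ℝ (Fin d)) r)) →
        Tendsto (fun ε => curvInt K E x ε) (𝓝[>] (0 : ℝ)) atTop := by
  rcases Nat.eq_zero_or_pos d with rfl | hd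
  · -- `EuclideanSpace ℝ (Fin 0)` is a point, so no set has a frontier point.
    exact ⟨1, one_pos, fun K _ _ E _ x hx => by simp at hx⟩
  have hLam0 : 0 ≤ Lam := hlam.le.trans hLam
  set q : ℝ := lam * 2 ^ (-((d : ℝ) + s)) with hq
  set κ : ℝ := (q + Lam) * 2 ^ d with hκ
  set θ : ℝ := q * (2 ^ d - 1) with hθ
  have hθ0 : 0 < θ := mul_pos (by positivity) (sub_pos.2 (one_lt_pow₀ one_lt_two hd.ne'))
  have hκθ : κ * (θ / (2 * κ)) = θ / 2 := by
    field_simp [(show 0 < κ by positivity).ne']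
  refine ⟨θ / (2 * κ), by positivity, fun K hK hKb E hE x _ r₀ hr₀ hden => ?_⟩
  have hω : 0 < volume.real (ball (0 : EuclideanSpace ℝ (Fin d)) 1) :=
    ENNReal.toReal_pos (measure_ball_pos volume _ one_pos).ne' measure_ball_lt_top.ne
  refine tendsto_atTop_of_add_rpow_le_of_le_on_Ioc (mul_pos hω (half_pos hθ0)) hs.1 hr₀
    (fun ε hε h2ε => ?_) (fun ε => hKb.sub_le_curvInt_of_mem_Ioc hK hs.1 hlam.le hLam0 hE)
  have hden' := measureReal_le_mul_of_le_ofReal_mul (by positivity) measure_ball_lt_top.ne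
    (hden (2 * ε) ⟨by positivity, h2ε⟩)
  rw [← Measure.addHaar_real_ball_center volume x] at hden'
  have hstep := hKb.curvInt_two_mul_add_le hK hs.1 hlam.le hLam0 hE hε hden'
  rw [← hq, ← hθ, ← hκ, mul_assoc, hκθ] at hstep
  linarith
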